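/- (Maclaurin's inequality on Γ_k) If λ ∈ Γ_k and 1 ≤ l ≤ m ≤ k, then (σ_m(λ)/C(n,m))^{1/m} ≤ (σ_l(λ)/C(n,l))^{1/l}. In particular σ_k(λ)/σ_1(λ) is bounded above by a constant times σ_1(λ)^{k−1}. -/

import Mathlib

/-- The `k`-th elementary symmetric polynomial of `lam : Fin n → ℝ`. -/
noncomputable def esymm (n k : ℕ) (lam : Fin n → ℝ) : ℝ :=
  ∑ s ∈ Finset.univ.powersetCard k, ∏ i ∈ s, lam i

/-- The Gårding cone `Γ_k ⊆ ℝⁿ`. -/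
def Gamma (n k : ℕ) : Set (Fin n → ℝ) :=
  {lam | ∀ l : ℕ, 1 ≤ l → l ≤ k → 0 < esymm n l lam}

/-- `σ_j(λ|i)`: the `j`-th elementary symmetric polynomial of `λ` with the
`i`-th coordinate deleted. -/
noncomputable def esymmDel (n j : ℕ) (i : Fin n) (lam : Fin n → ℝ) : ℝ :=
  ∑ s ∈ (Finset.univ.erase i).powersetCard j, ∏ m ∈ s, lam m

/-!
Newton's inequalities `E_j E_{j+2} ≤ E_{j+1}²` hold for the normalized means
`E_j = σ_j / C(n, j)` of any real multiset. Replacing the multiset by the roots of the derivative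
of `∏ (X - x)` (real by Rolle) keeps every `E_j`, which reduces to `n = j + 2`; inverting the
entries turns the indices `j, j + 1, j + 2` into `2, 1, 0`, and differentiating again down to two
numbers leaves `ab ≤ ((a + b) / 2)²`. On `Γ_k` the `E_j`, `j ≤ k`, are positive, and a positive
log-concave sequence with `E_0 = 1` has `E_j ^ (1 / j)` decreasing. The bound on `σ_k / σ_1` is
the case `l = 1`, `m = k`.
-/

open Polynomial

namespace Multiset

section CommSemiring

variable {R : Type*} [CommSemiring R]

@[simp]
theorem esymm_zero (s : Multiset R) : s.esymm 0 = 1 := by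
  simp [esymm]

theorem esymm_cons_succ (a : R) (s : Multiset R) (j : ℕ) :
    (a ::ₘ s).esymm (j + 1) = s.esymm (j + 1) + a * s.esymm j := by
  simp only [esymm, powersetCard_cons, map_add, sum_add, map_map, Function.comp_def, prod_cons,
    sum_map_mul_left]

theorem esymm_card (s : Multiset R) : s.esymm (card s) = s.prod := by
  simp [esymm, powersetCard_self]

theorem esymm_eq_zero_of_card_lt {s : Multiset R} {j : ℕ} (h : card s < j) : s.esymm j = 0 := by
  simp [esymm, powersetCard_eq_empty _ h]

end CommSemiring

theorem prod_mul_esymm_map_inv {K : Type*} [Field K] {s : Multiset K} (hs : ∀ x ∈ s, x ≠ 0)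
    {j : ℕ} (hj : j ≤ card s) : s.prod * (s.map (·⁻¹)).esymm j = s.esymm (card s - j) := by
  induction s using Multiset.induction generalizing j with
  | empty => simp_all
  | cons a t ih =>
    have ha : a ≠ 0 := hs a (mem_cons_self a t)
    have ih := @ih (fun x hx => hs x (mem_cons_of_mem hx))
    rw [card_cons] at hj ⊢
    rcases j with _ | j
    · simpa using (esymm_card (a ::ₘ t)).symm
    rw [map_cons, esymm_cons_succ, prod_cons]
    rcases hj.eq_or_lt with hj | hj
    · obtain rfl : j = card t := by omega
      have h := ih le_rfl
      rw [Nat.sub_self, esymm_zero] at h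
      rw [esymm_eq_zero_of_card_lt (by simp), Nat.sub_self, esymm_zero]
      linear_combination (a * a⁻¹) * h + mul_inv_cancel₀ ha
    · rw [show card t + 1 - (j + 1) = card t - (j + 1) + 1 by omega, esymm_cons_succ,
        ← ih (by omega), show card t - (j + 1) + 1 = card t - j by omega, ← ih (by omega)]
      field_simp
      ring

theorem exists_mul_esymm_eq_of_card_eq_succ {s : Multiset ℝ} {n : ℕ} (hs : card s = n + 1) :
    ∃ t : Multiset ℝ, card t = n ∧
      ∀ j ≤ n, (n + 1 : ℝ) * t.esymm j = ((n + 1 - j : ℕ) : ℝ) * s.esymm j := by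
  set f : ℝ[X] := (s.map fun a => X - C a).prod
  have hf_deg : f.natDegree = n + 1 := by rw [natDegree_multiset_prod_X_sub_C_eq_card, hs]
  have hf_monic : f.Monic := monic_multiset_prod_of_monic _ _ fun a _ => monic_X_sub_C a
  have hg_coeff (i : ℕ) : (derivative f).coeff i = f.coeff (i + 1) * (i + 1) := coeff_derivative f i
  have hg_deg : (derivative f).natDegree = n := by
    refine natDegree_eq_of_le_of_coeff_ne_zero ?_ ?_
    · exact (natDegree_derivative_le f).trans (by rw [hf_deg]; rfl)
    · rw [hg_coeff, ← hf_deg, hf_monic.coeff_natDegree]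
      positivity
  -- Rolle's theorem: between consecutive roots of `f` lies a root of `f'`.
  have hg_roots : card (derivative f).roots = (derivative f).natDegree := by
    have := card_roots_le_derivative f
    rw [roots_multiset_prod_X_sub_C, hs] at this
    have := card_roots' (derivative f)
    omega
  refine ⟨(derivative f).roots, by omega, fun j hj => ?_⟩
  have hg := coeff_eq_esymm_roots_of_card hg_roots (k := n - j) (by omega)
  have hf := prod_X_sub_C_coeff s (k := n - j + 1) (by omega)
  rw [hg_coeff, hg_deg, show n - (n - j) = j by omega] at hg
  rw [hs, show n + 1 - (n - j + 1) = j by omega] at hf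
  have hlead : (derivative f).leadingCoeff = n + 1 := by
    rw [leadingCoeff, hg_deg, hg_coeff, ← hf_deg, hf_monic.coeff_natDegree, one_mul]
  rw [hf, hlead] at hg
  have hsign : ((-1 : ℝ) ^ j) ≠ 0 := by positivity
  apply mul_left_cancel₀ hsign
  rw [Nat.cast_sub (by omega)] at hg ⊢
  push_cast at hg ⊢
  linear_combination -hg

noncomputable def normalizedEsymm (s : Multiset ℝ) (j : ℕ) : ℝ :=
  s.esymm j / (card s).choose j

@[simp]
theorem normalizedEsymm_zero (s : Multiset ℝ) : normalizedEsymm s 0 = 1 := by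
  simp [normalizedEsymm]

theorem exists_normalizedEsymm_eq_of_card_eq_succ {s : Multiset ℝ} {n : ℕ}
    (hs : card s = n + 1) :
    ∃ t : Multiset ℝ, card t = n ∧ ∀ j ≤ n, normalizedEsymm t j = normalizedEsymm s j := by
  obtain ⟨t, ht, hts⟩ := exists_mul_esymm_eq_of_card_eq_succ hs
  refine ⟨t, ht, fun j hj => ?_⟩
  have hchoose : (n.choose j : ℝ) * (n + 1) = (n + 1).choose j * (n + 1 - j : ℕ) := by
    exact_mod_cast Nat.choose_mul_succ_eq n j
  have h₁ : (0 : ℝ) < n.choose j := by exact_mod_cast Nat.choose_pos hj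
  have h₂ : (0 : ℝ) < (n + 1).choose j := by exact_mod_cast Nat.choose_pos (by omega)
  rw [normalizedEsymm, normalizedEsymm, ht, hs, div_eq_div_iff h₁.ne' h₂.ne']
  apply mul_right_cancel₀ (show (n : ℝ) + 1 ≠ 0 by positivity)
  linear_combination ((n + 1).choose j : ℝ) * hts j hj - s.esymm j * hchoose

theorem exists_normalizedEsymm_eq_of_le_card {s : Multiset ℝ} {m : ℕ} (hm : m ≤ card s) :
    ∃ t : Multiset ℝ, card t = m ∧ ∀ j ≤ m, normalizedEsymm t j = normalizedEsymm s j := by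
  obtain ⟨d, hd⟩ := Nat.exists_eq_add_of_le hm
  induction d generalizing s with
  | zero => exact ⟨s, hd, fun _ _ => rfl⟩
  | succ d ih =>
    obtain ⟨u, hu, hus⟩ := exists_normalizedEsymm_eq_of_card_eq_succ (n := m + d) hd
    obtain ⟨t, ht, htu⟩ := ih (s := u) (by omega) hu
    exact ⟨t, ht, fun j hj => (htu j hj).trans (hus j (by omega))⟩

theorem normalizedEsymm_two_le_sq {s : Multiset ℝ} (hs : 2 ≤ card s) :
    normalizedEsymm s 2 ≤ normalizedEsymm s 1 ^ 2 := by
  obtain ⟨t, ht, hts⟩ := exists_normalizedEsymm_eq_of_le_card hs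
  rw [← hts 2 le_rfl, ← hts 1 (by norm_num)]
  obtain ⟨a, b, rfl⟩ := card_eq_two.mp ht
  simp [normalizedEsymm]
  nlinarith [sq_nonneg (a - b)]

theorem normalizedEsymm_card_sub {s : Multiset ℝ} (hs : ∀ x ∈ s, x ≠ 0) {j : ℕ}
    (hj : j ≤ card s) :
    normalizedEsymm s (card s - j) = s.prod * normalizedEsymm (s.map (·⁻¹)) j := by
  rw [normalizedEsymm, normalizedEsymm, card_map, Nat.choose_symm hj,
    ← prod_mul_esymm_map_inv hs hj, mul_div_assoc]

theorem normalizedEsymm_mul_le_sq_of_card_eq {s : Multiset ℝ} {j : ℕ} (hs : card s = j + 2) :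
    normalizedEsymm s j * normalizedEsymm s (j + 2) ≤ normalizedEsymm s (j + 1) ^ 2 := by
  by_cases h0 : (0 : ℝ) ∈ s
  · have : normalizedEsymm s (j + 2) = 0 := by
      rw [normalizedEsymm, ← hs, esymm_card, prod_eq_zero h0, zero_div]
    rw [this, mul_zero]
    positivity
  -- `x ↦ x⁻¹` turns the indices `j, j + 1, j + 2 = card s` into `2, 1, 0`.
  have hs0 : ∀ x ∈ s, x ≠ 0 := fun x hx h => h0 (h ▸ hx)
  have e₀ := normalizedEsymm_card_sub hs0 (j := 0) (by omega)
  have e₁ := normalizedEsymm_card_sub hs0 (j := 1) (by omega)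
  have e₂ := normalizedEsymm_card_sub hs0 (j := 2) (by omega)
  rw [hs, Nat.sub_zero] at e₀
  rw [hs, Nat.add_sub_cancel] at e₂
  rw [hs, show j + 2 - 1 = j + 1 by omega] at e₁
  have key := normalizedEsymm_two_le_sq (s := s.map (·⁻¹)) (by rw [card_map]; omega)
  rw [e₀, e₁, e₂, normalizedEsymm_zero]
  calc s.prod * normalizedEsymm (s.map (·⁻¹)) 2 * (s.prod * 1)
      = s.prod ^ 2 * normalizedEsymm (s.map (·⁻¹)) 2 := by ring
    _ ≤ s.prod ^ 2 * normalizedEsymm (s.map (·⁻¹)) 1 ^ 2 := by gcongr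
    _ = (s.prod * normalizedEsymm (s.map (·⁻¹)) 1) ^ 2 := by ring

/-- Newton's inequalities. -/
theorem normalizedEsymm_mul_le_sq {s : Multiset ℝ} {j : ℕ} (hj : j + 2 ≤ card s) :
    normalizedEsymm s j * normalizedEsymm s (j + 2) ≤ normalizedEsymm s (j + 1) ^ 2 := by
  obtain ⟨t, ht, hts⟩ := exists_normalizedEsymm_eq_of_le_card hj
  rw [← hts j (by omega), ← hts (j + 1) (by omega), ← hts (j + 2) le_rfl]
  exact normalizedEsymm_mul_le_sq_of_card_eq ht

end Multiset

section LogConcave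

variable {p : ℕ → ℝ} {k : ℕ}

theorem pow_succ_le_pow_of_mul_le_sq (hp0 : p 0 = 1) (hpos : ∀ j ≤ k, 0 < p j)
    (hp : ∀ j, j + 2 ≤ k → p j * p (j + 2) ≤ p (j + 1) ^ 2) :
    ∀ j, j + 1 ≤ k → p (j + 1) ^ j ≤ p j ^ (j + 1) := by
  intro j hj
  induction j with
  | zero => simp [hp0]
  | succ j ih =>
    have hpos₀ := hpos j (by omega)
    have hpos₁ := hpos (j + 1) (by omega)
    have hpos₂ := hpos (j + 2) (by omega)
    refine le_of_mul_le_mul_left ?_ (pow_pos hpos₁ j)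
    calc p (j + 1) ^ j * p (j + 2) ^ (j + 1)
        ≤ p j ^ (j + 1) * p (j + 2) ^ (j + 1) := by gcongr; exact ih (by omega)
      _ = (p j * p (j + 2)) ^ (j + 1) := (mul_pow _ _ _).symm
      _ ≤ (p (j + 1) ^ 2) ^ (j + 1) := by gcongr; exact hp j hj
      _ = p (j + 1) ^ j * p (j + 1) ^ (j + 2) := by ring

theorem antitoneOn_rpow_one_div_of_mul_le_sq (hp0 : p 0 = 1) (hpos : ∀ j ≤ k, 0 < p j)
    (hp : ∀ j, j + 2 ≤ k → p j * p (j + 2) ≤ p (j + 1) ^ 2) :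
    AntitoneOn (fun j : ℕ => p j ^ (1 / (j : ℝ))) (Set.Icc 1 k) := by
  refine antitoneOn_of_add_one_le Set.ordConnected_Icc fun j _ hj hj' => ?_
  have hstep := pow_succ_le_pow_of_mul_le_sq hp0 hpos hp j hj'.2
  have hpos₀ := hpos j hj.2
  have hpos₁ := hpos (j + 1) hj'.2
  have hj₀ : j ≠ 0 := Nat.one_le_iff_ne_zero.mp hj.1
  rw [← pow_le_pow_iff_left₀ (by positivity) (by positivity) (n := j * (j + 1)) (by positivity)]
  simp only [one_div]
  rwa [pow_mul', Real.rpow_inv_natCast_pow hpos₁.le (Nat.add_one_ne_zero j), pow_mul,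
    Real.rpow_inv_natCast_pow hpos₀.le hj₀]

end LogConcave

theorem normalizedEsymm_map_univ {n : ℕ} (lam : Fin n → ℝ) (j : ℕ) :
    (Finset.univ.val.map lam).normalizedEsymm j = esymm n j lam / n.choose j := by
  rw [Multiset.normalizedEsymm, Finset.esymm_map_val, Multiset.card_map, Finset.card_val,
    Finset.card_univ, Fintype.card_fin, esymm]

theorem antitoneOn_esymm_div_choose_rpow {n k : ℕ} (hkn : k ≤ n) {lam : Fin n → ℝ}
    (hlam : lam ∈ Gamma n k) :
    AntitoneOn (fun j : ℕ => (esymm n j lam / n.choose j) ^ (1 / (j : ℝ))) (Set.Icc 1 k) := by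
  have hpos : ∀ j ≤ k, 0 < (Finset.univ.val.map lam).normalizedEsymm j := by
    intro j hj
    rcases j.eq_zero_or_pos with rfl | hj₀
    · simp
    rw [normalizedEsymm_map_univ]
    exact div_pos (hlam j hj₀ hj) (by exact_mod_cast Nat.choose_pos (hj.trans hkn))
  simpa only [normalizedEsymm_map_univ] using
    antitoneOn_rpow_one_div_of_mul_le_sq (Multiset.normalizedEsymm_zero _) hpos
      fun j hj => Multiset.normalizedEsymm_mul_le_sq (by simp; omega)

theorem esymm_div_choose_le_pow {n k : ℕ} (hk : 1 ≤ k) (hkn : k ≤ n) {lam : Fin n → ℝ}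
    (hlam : lam ∈ Gamma n k) :
    esymm n k lam / n.choose k ≤ (esymm n 1 lam / n) ^ k := by
  have h := antitoneOn_esymm_div_choose_rpow hkn hlam ⟨le_rfl, hk⟩ ⟨hk, le_rfl⟩ hk
  have hk₀ : 0 < esymm n k lam / n.choose k :=
    div_pos (hlam k hk le_rfl) (by exact_mod_cast Nat.choose_pos hkn)
  have h₁ : 0 < esymm n 1 lam / n := div_pos (hlam 1 le_rfl hk) (by exact_mod_cast hk.trans hkn)
  simp only [Nat.cast_one, div_one, Real.rpow_one, Nat.choose_one_right, one_div] at h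
  rwa [Real.rpow_inv_le_iff_of_pos hk₀.le h₁.le (by positivity), Real.rpow_natCast] at h

/-- Maclaurin's inequality on the cone, and the consequence for the quotient. -/
theorem stmt_10 (n k : ℕ) (hk : 1 ≤ k) (hkn : k ≤ n) :
    (∀ lam ∈ Gamma n k, ∀ l m : ℕ, 1 ≤ l → l ≤ m → m ≤ k →
      (esymm n m lam / (n.choose m : ℝ)) ^ ((1 : ℝ) / m) ≤
        (esymm n l lam / (n.choose l : ℝ)) ^ ((1 : ℝ) / l)) ∧
    (∃ C : ℝ, 0 < C ∧ ∀ lam ∈ Gamma n k,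
      esymm n k lam / esymm n 1 lam ≤ C * esymm n 1 lam ^ (k - 1)) := by
  have hn : 0 < n := by omega
  have hchoose : (0 : ℝ) < n.choose k := by exact_mod_cast Nat.choose_pos hkn
  refine ⟨fun lam hlam l m hl hlm hmk =>
      antitoneOn_esymm_div_choose_rpow hkn hlam ⟨hl, hlm.trans hmk⟩ ⟨hl.trans hlm, hmk⟩ hlm,
    n.choose k / n ^ k, by positivity, fun lam hlam => ?_⟩
  rw [div_le_iff₀ (hlam 1 le_rfl hk), mul_assoc, ← pow_succ, Nat.sub_add_cancel hk]
  calc esymm n k lam = n.choose k * (esymm n k lam / n.choose k) := by field_simp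
    _ ≤ n.choose k * (esymm n 1 lam / n) ^ k := by gcongr; exact esymm_div_choose_le_pow hk hkn hlam
    _ = n.choose k / n ^ k * esymm n 1 lam ^ k := by rw [div_pow]; ring
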